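/- Let n ≥ 1 and let I = (i_1, …, i_n) ∈ {0,1}^n; write ∂^{β^I} = ∂^{β^{i_1}} ∘ ∂^{β^{i_2}} ∘ ⋯ ∘ ∂^{β^{i_n}}, τ = λ_x∘∂, and σ = σ_1. Then, in End_k(R), (∏_{j : i_j = 1} (τ + j·id)) ∘ ∂^{β^I} = (∏_{j : i_j = 1} (q^j·σ − id)/(q − 1)) ∘ ∂^n, where in each product j ranges over the positions with i_j = 1 (the factors of each product commute with one another). -/
import Mathlib


open Polynomial

noncomputable section

namespace QDiff1

variable (k : Type*) [Field k]

/-- Left multiplication operator `λ_r`. -/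
def lmul (r : k[X]) : Module.End k k[X] := LinearMap.mulLeft k r

variable {k}

/-- The automorphism `σ_a`, acting on `x^b` by `q^(a*b)`. -/
def sigma (q : k) (a : ℤ) : Module.End k k[X] :=
  (aeval (C (q ^ a) * X) : k[X] →ₐ[k] k[X]).toLinearMap

/-- The operator `∂^{β^a}`, sending `x^b` to `(1 + q^a + ⋯ + q^{a(b-1)}) x^(b-1)`. -/
def dq (q : k) (a : ℤ) : Module.End k k[X] :=
  (Polynomial.basisMonomials k).constr k
    fun b => (∑ i ∈ Finset.range b, q ^ (a * (i : ℤ))) • X ^ (b - 1)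

/-- `φ` is homogeneous of degree `a : ℤ`. -/
def IsHomog (a : ℤ) (φ : Module.End k k[X]) : Prop :=
  ∀ b : ℕ, ∃ c : k, φ (X ^ b) = c • (if 0 ≤ a + (b : ℤ) then X ^ (a + (b : ℤ)).toNat else 0)

/-- `M` is closed under `φ ↦ λ_r ∘ φ ∘ λ_s`. -/
def Closed (M : Submodule k (Module.End k k[X])) : Prop :=
  ∀ r s : k[X], ∀ φ ∈ M, lmul k r * φ * lmul k s ∈ M

/-- The filtration `D_q^n` of `q`-differential operators on `k[x]`. -/
def Dq (q : k) : ℕ → Submodule k (Module.End k k[X])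
  | 0 => sInf {M | Closed M ∧
      {φ : Module.End k k[X] | ∃ a : ℤ, IsHomog a φ ∧ ∀ b : ℕ,
        φ * lmul k (X ^ b) = q ^ (a * (b : ℤ)) • (lmul k (X ^ b) * φ)} ⊆ ↑M}
  | n + 1 => sInf {M | Closed M ∧ Dq q n ≤ M ∧
      {φ : Module.End k k[X] | ∃ a : ℤ, IsHomog a φ ∧ ∀ b : ℕ,
        φ * lmul k (X ^ b) - q ^ (a * (b : ℤ)) • (lmul k (X ^ b) * φ) ∈ Dq q n} ⊆ ↑M}


theorem dq_apply (q : k) (a : ℤ) (b : ℕ) :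
    dq q a (X ^ b) = (∑ i ∈ Finset.range b, q ^ (a * (i : ℤ))) • X ^ (b - 1) := by
  have : (X : k[X]) ^ b = (Polynomial.basisMonomials k) b := by
    rw [Polynomial.coe_basisMonomials, X_pow_eq_monomial]
  rw [this, dq, Module.Basis.constr_basis]

theorem sigma_one_apply (q : k) (b : ℕ) : sigma q 1 (X ^ b) = q ^ b • X ^ b := by
  rw [sigma, AlgHom.toLinearMap_apply, map_pow, aeval_X, zpow_one, mul_pow, ← C_pow,
    ← smul_eq_C_mul]

theorem prod_diag_apply {n : ℕ} (F : Fin n → Module.End k k[X]) (d : Fin n → ℕ → k)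
    (h : ∀ j m, F j (X ^ m) = d j m • X ^ m) (m : ℕ) :
    (List.ofFn F).prod (X ^ m) = (∏ j, d j m) • X ^ m := by
  induction n with
  | zero => simp
  | succ n ih =>
    rw [List.ofFn_succ, List.prod_cons, Fin.prod_univ_succ, Module.End.mul_apply,
      ih (fun i => F i.succ) (fun i => d i.succ) (fun i m => h i.succ m), map_smul, h, smul_smul, mul_comm]

theorem prod_dq_apply (q : k) {n : ℕ} (a : Fin n → ℤ) (b : ℕ) :
    (List.ofFn fun j => dq q (a j)).prod (X ^ b) =
      (∏ j : Fin n, ∑ i ∈ Finset.range (b - (n - 1 - (j : ℕ))), q ^ (a j * (i : ℤ))) •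
        X ^ (b - n) := by
  induction n generalizing b with
  | zero => simp
  | succ n ih =>
    rw [List.ofFn_succ, List.prod_cons, Fin.prod_univ_succ, Module.End.mul_apply,
      ih (fun i => a i.succ) b, map_smul, dq_apply, smul_smul]
    have e1 : b - n - 1 = b - (n + 1) := by omega
    have e2 : ∀ i : Fin n, n - 1 - (i : ℕ) = n + 1 - 1 - ((i.succ : Fin (n + 1)) : ℕ) := by
      intro i; simp; omega
    have e3 : b - (n + 1 - 1 - ((0 : Fin (n + 1)) : ℕ)) = b - n := by simp
    rw [e1, e3, mul_comm]
    congr 2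
    exact Finset.prod_congr rfl fun i _ => by rw [e2 i]

theorem tau_apply (q : k) (m : ℕ) : (lmul k X * dq q 0) (X ^ m) = (m : k) • X ^ m := by
  rw [Module.End.mul_apply, dq_apply, map_smul]
  have hs : (∑ i ∈ Finset.range m, q ^ ((0 : ℤ) * (i : ℤ))) = (m : k) := by simp
  rw [hs]
  cases m with
  | zero => simp
  | succ m =>
    rw [lmul, LinearMap.mulLeft_apply, Nat.add_sub_cancel, ← pow_succ']

/-- for a multi-index I ∈ {0,1}^n,
(∏_{j : i_j = 1} (τ + j)) ∘ ∂^{β^I} = (∏_{j : i_j = 1} (q^j σ − 1)/(q−1)) ∘ ∂^n,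
where the products are taken over the positions j (1-based) with i_j = 1
(factors at positions with i_j = 0 are replaced by the identity). -/
theorem stmt14 [CharZero k] (q : k) (hq : Transcendental ℚ q)
    (n : ℕ) (hn : 1 ≤ n) (v : Fin n → ℕ) (hv : ∀ j, v j = 0 ∨ v j = 1) :
    (List.ofFn fun j : Fin n =>
        if v j = 1 then lmul k X * dq q 0 + (((j : ℕ) + 1 : ℕ) : k) • 1
        else (1 : Module.End k k[X])).prod *
      (List.ofFn fun j : Fin n => dq q ((v j : ℤ))).prod =
    (List.ofFn fun j : Fin n =>
        if v j = 1 then (q - 1)⁻¹ • (q ^ ((j : ℕ) + 1) • sigma q 1 - 1)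
        else (1 : Module.End k k[X])).prod *
      dq q 0 ^ n := by
  have hq1 : q ≠ 1 := fun h => hq (h ▸ isAlgebraic_one)
  apply (Polynomial.basisMonomials k).ext
  intro b
  have hXb : (Polynomial.basisMonomials k) b = (X : k[X]) ^ b := by
    rw [Polynomial.coe_basisMonomials, X_pow_eq_monomial]
  rw [hXb]
  have hrep : (dq q 0 : Module.End k k[X]) ^ n =
      (List.ofFn fun _ : Fin n => dq q (0 : ℤ)).prod := by
    rw [List.ofFn_const, List.prod_replicate]
  rw [Module.End.mul_apply, Module.End.mul_apply, hrep]
  rw [show ((List.ofFn fun j : Fin n => dq q ((v j : ℤ))).prod) (X ^ b) = _ from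
      prod_dq_apply q (fun j : Fin n => ((v j : ℤ))) b,
    show ((List.ofFn fun _ : Fin n => dq q (0 : ℤ)).prod) (X ^ b) = _ from
      prod_dq_apply q (fun _ : Fin n => (0 : ℤ)) b, map_smul, map_smul]
  set m := b - n with hm
  -- left diagonal product
  have hL : (List.ofFn fun j : Fin n =>
      if v j = 1 then lmul k X * dq q 0 + (((j : ℕ) + 1 : ℕ) : k) • 1
      else (1 : Module.End k k[X])).prod (X ^ m) =
      (∏ j : Fin n, if v j = 1 then (m : k) + ((j : ℕ) + 1 : k) else 1) • X ^ m := by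
    refine prod_diag_apply _
      (fun j m' => if v j = 1 then (m' : k) + ((j : ℕ) + 1 : k) else 1) (fun j m' => ?_) m
    by_cases hj : v j = 1
    · simp only [hj, if_true, LinearMap.add_apply, tau_apply, LinearMap.smul_apply,
        Module.End.one_apply]
      rw [← add_smul]
      congr 1
      push_cast
      ring
    · simp [hj]
  have hR : (List.ofFn fun j : Fin n =>
      if v j = 1 then (q - 1)⁻¹ • (q ^ ((j : ℕ) + 1) • sigma q 1 - 1)
      else (1 : Module.End k k[X])).prod (X ^ m) =
      (∏ j : Fin n, if v j = 1 then (q - 1)⁻¹ * (q ^ ((j : ℕ) + 1) * q ^ m - 1) else 1)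
        • X ^ m := by
    refine prod_diag_apply _
      (fun j m' => if v j = 1 then (q - 1)⁻¹ * (q ^ ((j : ℕ) + 1) * q ^ m' - 1) else 1)
      (fun j m' => ?_) m
    by_cases hj : v j = 1
    · simp only [hj, if_true, LinearMap.smul_apply, LinearMap.sub_apply, Module.End.one_apply,
        sigma_one_apply, smul_smul]
      rw [show (q ^ ((j : ℕ) + 1) * q ^ m') • (X ^ m' : k[X]) - X ^ m'
          = (q ^ ((j : ℕ) + 1) * q ^ m' - 1) • X ^ m' by rw [sub_smul, one_smul], smul_smul]
    · simp [hj]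
  rw [hL, hR, smul_smul, smul_smul]
  congr 1
  rw [← Finset.prod_mul_distrib, ← Finset.prod_mul_distrib]
  rcases le_or_gt n b with hb | hb
  · apply Finset.prod_congr rfl
    intro j _
    have hj' : (j : ℕ) < n := j.isLt
    have ht : b - (n - 1 - (j : ℕ)) = m + (j : ℕ) + 1 := by omega
    rw [ht]
    have hsum0 : (∑ i ∈ Finset.range (m + (j : ℕ) + 1), q ^ ((0 : ℤ) * (i : ℤ)))
        = ((m + (j : ℕ) + 1 : ℕ) : k) := by
      simp
    by_cases hj : v j = 1
    · simp only [hj, if_true]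
      have hsum1 : (∑ i ∈ Finset.range (m + (j : ℕ) + 1), q ^ (((v j : ℤ)) * (i : ℤ)))
          = (q ^ (m + (j : ℕ) + 1) - 1) / (q - 1) := by
        rw [← geom_sum_eq hq1]
        refine Finset.sum_congr rfl fun i _ => ?_
        rw [hj, Nat.cast_one, one_mul, zpow_natCast]
      rw [hj] at hsum1
      rw [hsum1, hsum0]
      have hq0 : q - 1 ≠ 0 := sub_ne_zero.mpr hq1
      have hpow : q ^ ((j : ℕ) + 1) * q ^ m = q ^ (m + (j : ℕ) + 1) := by
        rw [← pow_add]; ring_nf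
      rw [hpow]
      push_cast
      field_simp
      ring
    · have hj0 : v j = 0 := (hv j).resolve_right hj
      simp [hj, hj0]
  · have hj0 : b - (n - 1 - ((⟨0, hn⟩ : Fin n) : ℕ)) = 0 := by simp; omega
    rw [Finset.prod_eq_zero (Finset.mem_univ (⟨0, hn⟩ : Fin n)),
      Finset.prod_eq_zero (Finset.mem_univ (⟨0, hn⟩ : Fin n))]
    · rw [hj0]; simp
    · rw [hj0]; simp

end QDiff1
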